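/- If C is a full-dimensional circuit in R^d with signed partition (C_+, C_-), then for c, c' ∈ C, the two simplices C \ {c} and C \ {c'} can belong to a common triangulation of C if and only if c and c' lie on the same side of the partition (both in C_+ or both in C_-). -/

import Mathlib

/-- A triangulation of a finite point set `A ⊆ ℝ^d`: a collection of affinely
independent subsets of `A`, each affinely spanning the span of `A`, whose convex
hulls pairwise intersect in common faces and together cover `conv A`. -/
def IsTriang (d : ℕ) (A : Set (Fin d → ℝ)) (T : Set (Set (Fin d → ℝ))) : Prop :=
  (∀ σ ∈ T, σ ⊆ A ∧ AffineIndependent ℝ ((↑) : σ → (Fin d → ℝ)) ∧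
      affineSpan ℝ σ = affineSpan ℝ A) ∧
  (∀ σ ∈ T, ∀ σ' ∈ T,
      IsExtreme ℝ (convexHull ℝ σ) (convexHull ℝ σ ∩ convexHull ℝ σ') ∧
      IsExtreme ℝ (convexHull ℝ σ') (convexHull ℝ σ ∩ convexHull ℝ σ')) ∧
  (⋃ σ ∈ T, convexHull ℝ σ) = convexHull ℝ A

section CircuitHelpers
variable {d k : ℕ} {c : Fin k → (Fin d → ℝ)} {lam : Fin k → ℝ}

lemma circ_dep_zero (hmin : ∀ s : Set (Fin k), s ≠ Set.univ → AffineIndependent ℝ (fun j : s => c j))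
    {w : Fin k → ℝ} {m : Fin k} (hm : w m = 0)
    (h0 : ∑ p, w p = 0) (hcomb : ∑ p, w p • c p = 0) : w = 0 := by
  classical
  have hindep := hmin {x | x ≠ m} (by
    intro h
    have : (m : Fin k) ∈ ({x | x ≠ m} : Set (Fin k)) := h ▸ Set.mem_univ m
    exact this rfl)
  rw [affineIndependent_iff] at hindep
  have hsum : ∑ p : {x : Fin k // x ≠ m}, w p = 0 := by
    rw [← Finset.sum_subtype (Finset.univ.erase m) (by simp) w]
    rwa [Finset.sum_erase _ hm]
  have hcomb' : ∑ p : {x : Fin k // x ≠ m}, w p • c p = 0 := by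
    rw [← Finset.sum_subtype (Finset.univ.erase m) (by simp) (fun p => w p • c p)]
    rwa [Finset.sum_erase _ (by rw [hm, zero_smul])]
  have := hindep Finset.univ (fun p => w p) hsum hcomb'
  funext p
  by_cases hp : p = m
  · rw [hp, hm]; rfl
  · exact this ⟨p, hp⟩ (Finset.mem_univ _)

lemma circ_dep (hmin : ∀ s : Set (Fin k), s ≠ Set.univ → AffineIndependent ℝ (fun j : s => c j))
    (hlam0 : ∑ p, lam p = 0) (hlamc : ∑ p, lam p • c p = 0) (hall : ∀ p, lam p ≠ 0)
    (hk : 0 < k)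
    {w : Fin k → ℝ} (h0 : ∑ p, w p = 0) (hcomb : ∑ p, w p • c p = 0) :
    ∃ t : ℝ, w = t • lam := by
  classical
  set m : Fin k := ⟨0, hk⟩ with hm
  have hvz : (fun p => lam m * w p - w m * lam p) = 0 := by
    refine circ_dep_zero hmin (m := m) (by show lam m * w m - w m * lam m = 0; ring) ?_ ?_
    · simp only [Finset.sum_sub_distrib, ← Finset.mul_sum, h0, hlam0, mul_zero, sub_zero]
    · simp only [sub_smul, mul_smul, Finset.sum_sub_distrib, ← Finset.smul_sum, h0,
        hcomb, hlamc, smul_zero, sub_zero]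
  refine ⟨w m / lam m, funext fun p => ?_⟩
  have hp : lam m * w p - w m * lam p = 0 := congrFun hvz p
  have hlm := hall m
  show w p = w m / lam m * lam p
  field_simp
  linarith [hp]

lemma mem_hull_iff (hinj : Function.Injective c) (S : Finset (Fin k)) (x : Fin d → ℝ) :
    x ∈ convexHull ℝ (c '' ↑S) ↔ ∃ w : Fin k → ℝ, (∀ p, 0 ≤ w p) ∧ (∀ p ∉ S, w p = 0) ∧
      ∑ p, w p = 1 ∧ ∑ p, w p • c p = x := by
  classical
  constructor
  · intro hx
    rw [← Finset.coe_image, Finset.convexHull_eq] at hx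
    obtain ⟨W, hW0, hW1, hWc⟩ := hx
    refine ⟨fun p => if p ∈ S then W (c p) else 0, ?_, ?_, ?_, ?_⟩
    · intro p; dsimp only; split
      · exact hW0 _ (Finset.mem_image_of_mem _ ‹_›)
      · exact le_refl 0
    · intro p hp; simp [hp]
    · dsimp only
      rw [Finset.sum_ite_mem, Finset.univ_inter, ← Finset.sum_image (fun a _ b _ h => hinj h)]
      exact hW1
    · dsimp only
      rw [← hWc, Finset.centerMass_eq_of_sum_1 _ _ hW1]
      rw [Finset.sum_congr rfl (fun p (_ : p ∈ Finset.univ) => by rw [ite_smul, zero_smul]),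
        Finset.sum_ite_mem, Finset.univ_inter]
      exact (Finset.sum_image (f := fun y => W y • id y) (fun a _ b _ h => hinj h)).symm
  · rintro ⟨w, hw0, hwS, hw1, hwx⟩
    rw [← hwx, ← Finset.sum_subset S.subset_univ (fun p _ hp => by rw [hwS p hp, zero_smul])]
    rw [← Finset.centerMass_eq_of_sum_1 _ c (by
      rw [Finset.sum_subset S.subset_univ (fun p _ hp => hwS p hp)]; exact hw1)]
    exact S.centerMass_mem_convexHull (fun p _ => hw0 p) (by
      rw [Finset.sum_subset S.subset_univ (fun p _ hp => hwS p hp), hw1]; norm_num)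
      (fun p hp => Set.mem_image_of_mem c hp)

lemma extreme_mem_of_pos_comb {E : Type*} [AddCommGroup E] [Module ℝ E]
    {A F : Set E} (hA : Convex ℝ A) (hAF : IsExtreme ℝ A F)
    {ι : Type*} {t : Finset ι} {w : ι → ℝ} {z : ι → E}
    (hw : ∀ p ∈ t, 0 < w p) (h1 : ∑ p ∈ t, w p = 1) (hz : ∀ p ∈ t, z p ∈ A)
    (hx : ∑ p ∈ t, w p • z p ∈ F) : ∀ p ∈ t, z p ∈ F := by
  classical
  intro q hq
  have hsplit : w q + ∑ p ∈ t.erase q, w p = 1 := by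
    rw [Finset.add_sum_erase t w hq]; exact h1
  have hsplitc : ∑ p ∈ t, w p • z p = w q • z q + ∑ p ∈ t.erase q, w p • z p :=
    (Finset.add_sum_erase t _ hq).symm
  by_cases hcase : (1 : ℝ) - w q = 0
  · have hempty : t.erase q = ∅ := by
      by_contra hne
      have h2 : 0 < ∑ p ∈ t.erase q, w p :=
        Finset.sum_pos (fun r hr => hw r (Finset.mem_of_mem_erase hr))
          (Finset.nonempty_of_ne_empty hne)
      linarith
    have : ∑ p ∈ t, w p • z p = z q := by
      rw [hsplitc, hempty, Finset.sum_empty, add_zero, show w q = 1 by linarith, one_smul]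
    rwa [← this]
  · have hwq := hw q hq
    have hs1 : ∑ p ∈ t.erase q, w p = 1 - w q := by linarith
    have hspos : 0 < 1 - w q := by
      by_cases hne : t.erase q = ∅
      · rw [hne, Finset.sum_empty] at hs1; exact absurd hs1.symm hcase
      · rw [← hs1]
        exact Finset.sum_pos (fun r hr => hw r (Finset.mem_of_mem_erase hr))
          (Finset.nonempty_of_ne_empty hne)
    set s : ℝ := 1 - w q with hsdef
    set y : E := s⁻¹ • ∑ p ∈ t.erase q, w p • z p with hy
    have hyA : y ∈ A := by
      have hrw : y = ∑ p ∈ t.erase q, (s⁻¹ * w p) • z p := by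
        rw [hy, Finset.smul_sum]; simp [mul_smul]
      rw [hrw]
      refine hA.sum_mem (fun p hp => ?_) ?_ (fun p hp => hz p (Finset.mem_of_mem_erase hp))
      · have := hw p (Finset.mem_of_mem_erase hp)
        positivity
      · rw [← Finset.mul_sum, hs1, inv_mul_cancel₀ (ne_of_gt hspos)]
    have hseg : ∑ p ∈ t, w p • z p ∈ openSegment ℝ (z q) y :=
      ⟨w q, s, hwq, hspos, by simp [hsdef], by
        rw [hy, smul_inv_smul₀ (ne_of_gt hspos), ← hsplitc]⟩
    exact hAF.2 (hz q hq) hyA hx hseg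

lemma face_extreme (hinj : Function.Injective c)
    (hmin : ∀ s : Set (Fin k), s ≠ Set.univ → AffineIndependent ℝ (fun j : s => c j))
    {S T : Finset (Fin k)} (hST : S ⊆ T) (hT : T ≠ Finset.univ) :
    IsExtreme ℝ (convexHull ℝ (c '' ↑T)) (convexHull ℝ (c '' ↑S)) := by
  classical
  obtain ⟨m, hm⟩ : ∃ m, m ∉ T := by
    by_contra h
    push_neg at h
    exact hT (Finset.eq_univ_iff_forall.2 h)
  constructor
  · exact convexHull_mono (Set.image_mono (Finset.coe_subset.2 hST))
  · intro x1 hx1 x2 hx2 x hxS hseg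
    obtain ⟨a, ha0, haT, ha1, hax⟩ := (mem_hull_iff hinj T x1).1 hx1
    obtain ⟨b, hb0, hbT, hb1, hbx⟩ := (mem_hull_iff hinj T x2).1 hx2
    obtain ⟨u, hu0, huS, hu1, hux⟩ := (mem_hull_iff hinj S x).1 hxS
    obtain ⟨θ, η, hθ, hη, hθη, hxeq⟩ := hseg
    set v : Fin k → ℝ := fun p => θ * a p + η * b p with hv
    have hveq : u = v := by
      have hdiff : (fun p => u p - v p) = 0 := by
        refine circ_dep_zero hmin (m := m)
          (by simp [hv, haT m hm, hbT m hm, huS m (fun hmS => hm (hST hmS))]) ?_ ?_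
        · simp only [hv, Finset.sum_sub_distrib, Finset.sum_add_distrib, ← Finset.mul_sum,
            hu1, ha1, hb1, mul_one, hθη, sub_self]
        · simp only [hv, sub_smul, add_smul, mul_smul, Finset.sum_sub_distrib,
            Finset.sum_add_distrib, ← Finset.smul_sum, hux, hax, hbx, ← hxeq]
          abel
      funext p
      have := congrFun hdiff p
      simp only [Pi.zero_apply] at this
      linarith [this]
    have key : ∀ p ∉ S, a p = 0 ∧ b p = 0 := by
      intro p hp
      have h1 : θ * a p + η * b p = 0 := (congrFun hveq p).symm.trans (huS p hp)
      have h2 : 0 ≤ θ * a p := mul_nonneg hθ.le (ha0 p)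
      have h3 : 0 ≤ η * b p := mul_nonneg hη.le (hb0 p)
      have h4 : θ * a p = 0 := by linarith
      have h5 : η * b p = 0 := by linarith
      exact ⟨by rcases mul_eq_zero.1 h4 with h | h; exacts [absurd h hθ.ne', h],
        by rcases mul_eq_zero.1 h5 with h | h; exacts [absurd h hη.ne', h]⟩
    exact (mem_hull_iff hinj S x1).2 ⟨a, ha0, fun p hp => (key p hp).1, ha1, hax⟩

lemma inter_hull_subset (hinj : Function.Injective c)
    (hmin : ∀ s : Set (Fin k), s ≠ Set.univ → AffineIndependent ℝ (fun j : s => c j))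
    (hlam0 : ∑ p, lam p = 0) (hlamc : ∑ p, lam p • c p = 0) (hall : ∀ p, lam p ≠ 0)
    {m n : Fin k} (hm : 0 < lam m) (hn : 0 < lam n) (hmn : m ≠ n) :
    convexHull ℝ (c '' ↑(Finset.univ.erase m)) ∩ convexHull ℝ (c '' ↑(Finset.univ.erase n)) ⊆
      convexHull ℝ (c '' ↑((Finset.univ.erase m).erase n)) := by
  classical
  rintro x ⟨hxm, hxn⟩
  obtain ⟨a, ha0, ham, ha1, hax⟩ := (mem_hull_iff hinj _ x).1 hxm
  obtain ⟨b, hb0, hbn, hb1, hbx⟩ := (mem_hull_iff hinj _ x).1 hxn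
  have ham' : a m = 0 := ham m (by simp)
  have hbn' : b n = 0 := hbn n (by simp)
  have hk : 0 < k := Fin.pos_iff_nonempty.2 ⟨m⟩
  obtain ⟨t, ht⟩ := circ_dep hmin hlam0 hlamc hall hk
    (w := fun p => a p - b p) (by rw [Finset.sum_sub_distrib, ha1, hb1, sub_self])
    (by simp only [sub_smul, Finset.sum_sub_distrib, hax, hbx, sub_self])
  have htm : a m - b m = t * lam m := congrFun ht m
  have htn : a n - b n = t * lam n := congrFun ht n
  have ht0 : t ≤ 0 := by nlinarith [hb0 m]
  have han : a n = 0 := by nlinarith [ha0 n]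
  have htz : t = 0 := by
    have : t * lam n = 0 := by rw [← htn]; simp [han, hbn']
    rcases mul_eq_zero.1 this with h | h
    · exact h
    · exact absurd h (hall n)
  have hab : ∀ p, a p = b p := fun p => by have := congrFun ht p; simp [htz] at this; linarith
  refine (mem_hull_iff hinj _ x).2 ⟨a, ha0, fun p hp => ?_, ha1, hax⟩
  have hpc : p = n ∨ p = m := by
    by_contra hcon
    push_neg at hcon
    exact hp (by simp [Finset.mem_erase, hcon.1, hcon.2])
  rcases hpc with h | h
  · rw [h]; exact han
  · rw [h]; exact ham'

lemma hull_covering (hinj : Function.Injective c)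
    (hlam0 : ∑ p, lam p = 0) (hlamc : ∑ p, lam p • c p = 0) (hall : ∀ p, lam p ≠ 0)
    {x : Fin d → ℝ} (hx : x ∈ convexHull ℝ (Set.range c)) :
    ∃ m, 0 < lam m ∧ x ∈ convexHull ℝ (c '' ↑(Finset.univ.erase m)) := by
  classical
  have hrange : Set.range c = c '' ↑(Finset.univ : Finset (Fin k)) := by simp
  rw [hrange] at hx
  obtain ⟨w, hw0, -, hw1, hwx⟩ := (mem_hull_iff hinj _ x).1 hx
  set P : Finset (Fin k) := Finset.univ.filter (fun p => 0 < lam p) with hP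
  have huniv : (Finset.univ : Finset (Fin k)).Nonempty := by
    by_contra h
    rw [Finset.not_nonempty_iff_eq_empty] at h
    rw [h, Finset.sum_empty] at hw1
    norm_num at hw1
  have hPne : P.Nonempty := by
    by_contra hne
    rw [Finset.not_nonempty_iff_eq_empty] at hne
    have hneg : ∀ p, lam p < 0 := by
      intro p
      rcases lt_trichotomy (lam p) 0 with h | h | h
      · exact h
      · exact absurd h (hall p)
      · have hmem : p ∈ P := by rw [hP]; exact Finset.mem_filter.2 ⟨Finset.mem_univ p, h⟩
        rw [hne] at hmem; simp at hmem
    have : ∑ p, lam p < 0 := Finset.sum_neg (fun p _ => hneg p) huniv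
    rw [hlam0] at this; exact lt_irrefl 0 this
  obtain ⟨m, hmP, hmin'⟩ := P.exists_min_image (fun p => w p / lam p) hPne
  have hmlam : 0 < lam m := (Finset.mem_filter.1 hmP).2
  set t : ℝ := w m / lam m with htdef
  have ht0 : 0 ≤ t := div_nonneg (hw0 m) hmlam.le
  set w' : Fin k → ℝ := fun p => w p - t * lam p with hw'
  have hw'0 : ∀ p, 0 ≤ w' p := by
    intro p
    rcases lt_trichotomy (lam p) 0 with h | h | h
    · have : t * lam p ≤ 0 := mul_nonpos_of_nonneg_of_nonpos ht0 h.le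
      simp only [hw']; linarith [hw0 p]
    · exact absurd h (hall p)
    · have := hmin' p (Finset.mem_filter.2 ⟨Finset.mem_univ p, h⟩)
      simp only [hw', htdef]
      rw [div_le_div_iff₀ hmlam h] at this
      rw [sub_nonneg, div_mul_eq_mul_div, div_le_iff₀ hmlam]
      exact this
  refine ⟨m, hmlam, (mem_hull_iff hinj _ x).2 ⟨w', hw'0, ?_, ?_, ?_⟩⟩
  · intro p hp
    simp only [Finset.mem_erase, Finset.mem_univ, and_true, not_and, not_not] at hp
    have : p = m := by simpa using hp
    rw [this, hw']
    have : lam m ≠ 0 := hall m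
    simp only [htdef, div_mul_cancel₀ _ this, sub_self]
  · simp only [hw', Finset.sum_sub_distrib, ← Finset.mul_sum, hw1, hlam0, mul_zero, sub_zero]
  · simp only [hw', sub_smul, mul_smul, Finset.sum_sub_distrib, ← Finset.smul_sum, hwx, hlamc,
      smul_zero, sub_zero]

lemma facet_eq (hinj : Function.Injective c) (m : Fin k) :
    Set.range c \ {c m} = c '' ↑(Finset.univ.erase m) := by
  ext x
  simp only [Set.mem_diff, Set.mem_range, Set.mem_singleton_iff, Set.mem_image,
    Finset.coe_erase, Finset.coe_univ, Set.mem_diff, Set.mem_univ, true_and]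
  constructor
  · rintro ⟨⟨p, rfl⟩, hne⟩
    exact ⟨p, fun h => hne (by rw [h]), rfl⟩
  · rintro ⟨p, hp, rfl⟩
    exact ⟨⟨p, rfl⟩, fun h => hp (by simpa using hinj h)⟩

lemma facet_indep (hmin : ∀ s : Set (Fin k), s ≠ Set.univ → AffineIndependent ℝ (fun j : s => c j))
    (m : Fin k) :
    AffineIndependent ℝ ((↑) : (c '' ↑(Finset.univ.erase m)) → (Fin d → ℝ)) := by
  have h := (hmin {p | p ≠ m} (by
    intro h
    have : (m : Fin k) ∈ ({p | p ≠ m} : Set (Fin k)) := h ▸ Set.mem_univ m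
    exact this rfl)).range
  have hr : Set.range (fun j : ({p | p ≠ m} : Set (Fin k)) => c j) = c '' ↑(Finset.univ.erase m) := by
    rw [show (fun j : ({p | p ≠ m} : Set (Fin k)) => c j) = ({p | p ≠ m} : Set (Fin k)).domRestrict c from rfl,
      Set.range_restrict]
    congr 1
    ext p; simp
  rwa [hr] at h

lemma facet_span (hmin : ∀ s : Set (Fin k), s ≠ Set.univ → AffineIndependent ℝ (fun j : s => c j))
    (hlam0 : ∑ p, lam p = 0) (hlamc : ∑ p, lam p • c p = 0) (hall : ∀ p, lam p ≠ 0)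
    (hspan : affineSpan ℝ (Set.range c) = ⊤) (m : Fin k) :
    affineSpan ℝ (c '' ↑(Finset.univ.erase m)) = affineSpan ℝ (Set.range c) := by
  classical
  have hset : (↑(Finset.univ.erase m) : Set (Fin k)) = {q | q ≠ m} := by
    ext q; simp
  have himg : c '' ↑(Finset.univ.erase m) = Set.range (fun j : {q : Fin k // q ≠ m} => c j) := by
    rw [hset, show (fun j : {q : Fin k // q ≠ m} => c j) =
      ({q | q ≠ m} : Set (Fin k)).domRestrict c from rfl, Set.range_restrict]
  apply le_antisymm
  · exact affineSpan_mono ℝ (Set.image_subset_range c _)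
  rw [affineSpan_le]
  rintro x ⟨p, rfl⟩
  by_cases hp : p = m
  · subst hp
    have hsum_erase : ∑ q ∈ Finset.univ.erase p, lam q = -lam p := by
      have := Finset.add_sum_erase Finset.univ lam (Finset.mem_univ p)
      rw [hlam0] at this; linarith
    set w' : {q : Fin k // q ≠ p} → ℝ := fun j => -lam j / lam p with hw'
    have hw1 : ∑ j : {q : Fin k // q ≠ p}, w' j = 1 := by
      rw [← Finset.sum_subtype (Finset.univ.erase p) (by simp) (fun q => -lam q / lam p)]
      rw [show (fun q => -lam q / lam p) = fun q => (fun q => -lam q) q / lam p from rfl,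
        ← Finset.sum_div, Finset.sum_neg_distrib, hsum_erase, neg_neg, div_self (hall p)]
    have hmem := affineCombination_mem_affineSpan (k := ℝ) (s := Finset.univ) hw1
      (fun j : {q : Fin k // q ≠ p} => c j)
    have hval : (Finset.univ.affineCombination ℝ (fun j : {q : Fin k // q ≠ p} => c j)) w'
        = c p := by
      rw [Finset.affineCombination_eq_linear_combination _ _ _ hw1]
      have hstep : ∑ j : {q : Fin k // q ≠ p}, w' j • c j
          = ∑ q ∈ Finset.univ.erase p, (-lam q / lam p) • c q := by
        rw [← Finset.sum_subtype (Finset.univ.erase p) (by simp)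
          (fun q => (-lam q / lam p) • c q)]
      rw [hstep]
      have h2 : ∑ q ∈ Finset.univ.erase p, lam q • c q = -(lam p • c p) := by
        have h3 : lam p • c p + ∑ q ∈ Finset.univ.erase p, lam q • c q = 0 := by
          rw [Finset.add_sum_erase Finset.univ (fun q => lam q • c q) (Finset.mem_univ p)]
          exact hlamc
        linear_combination (norm := module) h3
      have hterm : ∀ q, (-lam q / lam p) • c q = (-(lam p)⁻¹) • (lam q • c q) := by
        intro q
        rw [smul_smul]
        congr 1
        field_simp
      rw [Finset.sum_congr rfl (fun q _ => hterm q), ← Finset.smul_sum, h2,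
        smul_neg, neg_smul, neg_neg, smul_smul, inv_mul_cancel₀ (hall p), one_smul]
    rw [hval] at hmem
    rw [himg]
    exact hmem
  · exact subset_affineSpan ℝ _ ⟨p, by simp [hp], rfl⟩

lemma vertex_not_in_facet (hinj : Function.Injective c)
    (hmin : ∀ s : Set (Fin k), s ≠ Set.univ → AffineIndependent ℝ (fun j : s => c j))
    (hlam0 : ∑ p, lam p = 0) (hlamc : ∑ p, lam p • c p = 0) (hall : ∀ p, lam p ≠ 0)
    {m q : Fin k} (hq : q ≠ m) (hsign : 0 < lam q / lam m)
    (hmem : c m ∈ convexHull ℝ (c '' ↑(Finset.univ.erase m))) : False := by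
  classical
  obtain ⟨ν, hν0, hνm, hν1, hνx⟩ := (mem_hull_iff hinj _ (c m)).1 hmem
  have hνm' : ν m = 0 := hνm m (by simp)
  have hk : 0 < k := Fin.pos_iff_nonempty.2 ⟨m⟩
  set w : Fin k → ℝ := fun p => ν p - (if p = m then 1 else 0) with hw
  obtain ⟨t, ht⟩ := circ_dep hmin hlam0 hlamc hall hk (w := w)
    (by simp [hw, Finset.sum_sub_distrib, hν1])
    (by
      simp only [hw, sub_smul, Finset.sum_sub_distrib, hνx, ite_smul, one_smul, zero_smul,
        Finset.sum_ite_eq', Finset.mem_univ, if_pos, sub_self])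
  have htm : (0:ℝ) - 1 = t * lam m := by
    have := congrFun ht m
    simpa [hw, hνm'] using this
  have htq : ν q = t * lam q := by
    have := congrFun ht q
    simpa [hw, hq] using this
  have hm0 := hall m
  have htval : t = -1 / lam m := by
    field_simp at htm ⊢
    linarith
  have : ν q < 0 := by
    rw [htq, htval]
    have hrw : -1 / lam m * lam q = -(lam q / lam m) := by ring
    rw [hrw]
    linarith
  linarith [hν0 q]

lemma no_common_triang (hinj : Function.Injective c)
    (hmin : ∀ s : Set (Fin k), s ≠ Set.univ → AffineIndependent ℝ (fun j : s => c j))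
    (hlam0 : ∑ p, lam p = 0) (hlamc : ∑ p, lam p • c p = 0) (hall : ∀ p, lam p ≠ 0)
    {i j : Fin k} (hi : 0 < lam i) (hj : lam j < 0)
    {T : Set (Set (Fin d → ℝ))} (hT : IsTriang d (Set.range c) T)
    (hiT : (Set.range c \ {c i}) ∈ T) (hjT : (Set.range c \ {c j}) ∈ T) : False := by
  classical
  have hij : i ≠ j := fun h => by rw [h] at hi; linarith
  set Pos : Finset (Fin k) := Finset.univ.filter (fun p => 0 < lam p) with hPos
  set Neg : Finset (Fin k) := Finset.univ.filter (fun p => lam p < 0) with hNeg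
  have hiP : i ∈ Pos := by rw [hPos]; simp [hi]
  have hjN : j ∈ Neg := by rw [hNeg]; simp [hj]
  set Lam : ℝ := ∑ p ∈ Pos, lam p with hLam
  have hLpos : 0 < Lam := Finset.sum_pos (fun p hp => by
    rw [hPos] at hp; exact (Finset.mem_filter.1 hp).2) ⟨i, hiP⟩
  have hsplit : ∑ p ∈ Pos, lam p + ∑ p ∈ Neg, lam p = 0 := by
    rw [hPos, hNeg]
    rw [show Finset.univ.filter (fun p => lam p < 0)
        = Finset.univ.filter (fun p => ¬ 0 < lam p) from Finset.filter_congr (fun q _ => by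
      constructor
      · intro h; push_neg; linarith
      · intro h; rcases lt_trichotomy (lam q) 0 with h' | h' | h'
        · exact h'
        · exact absurd h' (hall q)
        · exact absurd h' (by simpa using h))]
    rw [Finset.sum_filter_add_sum_filter_not]
    exact hlam0
  have hsplitc : ∑ p ∈ Pos, lam p • c p + ∑ p ∈ Neg, lam p • c p = 0 := by
    rw [hPos, hNeg]
    rw [show Finset.univ.filter (fun p => lam p < 0)
        = Finset.univ.filter (fun p => ¬ 0 < lam p) from Finset.filter_congr (fun q _ => by
      constructor
      · intro h; push_neg; linarith
      · intro h; rcases lt_trichotomy (lam q) 0 with h' | h' | h'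
        · exact h'
        · exact absurd h' (hall q)
        · exact absurd h' (by simpa using h))]
    rw [Finset.sum_filter_add_sum_filter_not]
    exact hlamc
  set pt : Fin d → ℝ := Lam⁻¹ • ∑ p ∈ Pos, lam p • c p with hpt
  -- pt in hull of facet j via positive weights
  have hptj : pt ∈ convexHull ℝ (c '' ↑(Finset.univ.erase j)) := by
    refine (mem_hull_iff hinj _ pt).2 ⟨fun p => if p ∈ Pos then lam p / Lam else 0, ?_, ?_, ?_, ?_⟩
    · intro p; dsimp only; split
      · have := (Finset.mem_filter.1 (hPos ▸ ‹p ∈ Pos›)).2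
        exact div_nonneg this.le hLpos.le
      · exact le_refl 0
    · intro p hp
      dsimp only
      rw [if_neg]
      intro hpP
      have := (Finset.mem_filter.1 (hPos ▸ hpP)).2
      exact hp (Finset.mem_erase.2 ⟨fun h => by subst h; linarith, Finset.mem_univ p⟩)
    · dsimp only
      rw [Finset.sum_ite_mem, Finset.univ_inter, ← Finset.sum_div, ← hLam,
        div_self (ne_of_gt hLpos)]
    · dsimp only
      rw [Finset.sum_congr rfl (fun p (_ : p ∈ Finset.univ) => by rw [ite_smul, zero_smul]),
        Finset.sum_ite_mem, Finset.univ_inter, hpt, Finset.smul_sum]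
      exact Finset.sum_congr rfl (fun p _ => by rw [smul_smul, div_eq_inv_mul])
  -- pt in hull of facet i via negative weights
  have hptneg : ∑ p ∈ Neg, (-lam p / Lam) • c p = pt := by
    rw [hpt]
    have : ∑ p ∈ Pos, lam p • c p = -∑ p ∈ Neg, lam p • c p := by
      linear_combination (norm := module) hsplitc
    rw [this, smul_neg, Finset.smul_sum, ← Finset.sum_neg_distrib]
    exact Finset.sum_congr rfl (fun p _ => by rw [neg_div, neg_smul, smul_smul, div_eq_inv_mul])
  have hnegsum : ∑ p ∈ Neg, (-lam p / Lam) = 1 := by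
    have h2 : ∑ p ∈ Neg, lam p = -Lam := by rw [hLam]; linarith
    rw [show (fun p => -lam p / Lam) = fun p => (fun p => -lam p) p / Lam from rfl,
      ← Finset.sum_div, Finset.sum_neg_distrib, h2, neg_neg, div_self (ne_of_gt hLpos)]
  have hpti : pt ∈ convexHull ℝ (c '' ↑(Finset.univ.erase i)) := by
    refine (mem_hull_iff hinj _ pt).2 ⟨fun p => if p ∈ Neg then -lam p / Lam else 0, ?_, ?_, ?_, ?_⟩
    · intro p; dsimp only; split
      · have := (Finset.mem_filter.1 (hNeg ▸ ‹p ∈ Neg›)).2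
        exact div_nonneg (by linarith) hLpos.le
      · exact le_refl 0
    · intro p hp
      dsimp only
      rw [if_neg]
      intro hpN
      have := (Finset.mem_filter.1 (hNeg ▸ hpN)).2
      exact hp (Finset.mem_erase.2 ⟨fun h => by subst h; linarith, Finset.mem_univ p⟩)
    · dsimp only
      rw [Finset.sum_ite_mem, Finset.univ_inter]
      exact hnegsum
    · dsimp only
      rw [Finset.sum_congr rfl (fun p (_ : p ∈ Finset.univ) => by rw [ite_smul, zero_smul]),
        Finset.sum_ite_mem, Finset.univ_inter]
      exact hptneg
  -- the common face
  obtain ⟨hext1, hext2⟩ := hT.2.1 _ hiT _ hjT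
  rw [facet_eq hinj i, facet_eq hinj j] at hext1 hext2
  set F : Set (Fin d → ℝ) := convexHull ℝ (c '' ↑(Finset.univ.erase i)) ∩
    convexHull ℝ (c '' ↑(Finset.univ.erase j)) with hF
  have hptF : pt ∈ F := ⟨hpti, hptj⟩
  -- peel: all negative points are in F
  have hnegF : ∀ q ∈ Neg, c q ∈ F := by
    refine extreme_mem_of_pos_comb (convex_convexHull ℝ _) hext1
      (w := fun p => -lam p / Lam) (z := c) ?_ hnegsum ?_ (by rw [hptneg]; exact hptF)
    · intro p hp
      have := (Finset.mem_filter.1 (hNeg ▸ hp)).2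
      exact div_pos (by linarith) hLpos
    · intro p hp
      have hpi : p ≠ i := fun h => by
        subst h
        have := (Finset.mem_filter.1 (hNeg ▸ hp)).2
        linarith
      exact subset_convexHull ℝ _ ⟨p, by simp [hpi], rfl⟩
  have hposF : ∀ q ∈ Pos, c q ∈ F := by
    refine extreme_mem_of_pos_comb (convex_convexHull ℝ _) hext2
      (w := fun p => lam p / Lam) (z := c) ?_ ?_ ?_ ?_
    · intro p hp
      have := (Finset.mem_filter.1 (hPos ▸ hp)).2
      exact div_pos this hLpos
    · rw [show (fun p => lam p / Lam) = fun p => lam p / Lam from rfl, ← Finset.sum_div, ← hLam,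
        div_self (ne_of_gt hLpos)]
    · intro p hp
      have hpj : p ≠ j := fun h => by
        subst h
        have := (Finset.mem_filter.1 (hPos ▸ hp)).2
        linarith
      exact subset_convexHull ℝ _ ⟨p, by simp [hpj], rfl⟩
    · have : ∑ p ∈ Pos, (lam p / Lam) • c p = pt := by
        rw [hpt, Finset.smul_sum]
        exact Finset.sum_congr rfl (fun p _ => by rw [smul_smul, div_eq_inv_mul])
      rw [this]; exact hptF
  -- now derive contradiction
  have hciF : c i ∈ convexHull ℝ (c '' ↑(Finset.univ.erase i)) := (hposF i hiP).1
  have hcjF : c j ∈ convexHull ℝ (c '' ↑(Finset.univ.erase j)) := (hnegF j hjN).2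
  -- find another index of matching sign, or collapse to two points
  by_cases hexj : ∃ q, q ≠ j ∧ lam q < 0
  · obtain ⟨q, hqj, hq⟩ := hexj
    exact vertex_not_in_facet hinj hmin hlam0 hlamc hall hqj
      (div_pos_iff.2 (Or.inr ⟨hq, hj⟩)) hcjF
  · by_cases hexi : ∃ q, q ≠ i ∧ 0 < lam q
    · obtain ⟨q, hqi, hq⟩ := hexi
      exact vertex_not_in_facet hinj hmin hlam0 hlamc hall hqi
        (div_pos hq hi) hciF
    · push_neg at hexj hexi
      have huniv : ∀ q : Fin k, q = i ∨ q = j := by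
        intro q
        rcases lt_trichotomy (lam q) 0 with h | h | h
        · right
          by_contra hq
          exact absurd h (not_lt.2 (hexj q hq))
        · exact absurd h (hall q)
        · left
          by_contra hq
          exact absurd (hexi q hq) (not_le.2 h)
      have hU : (Finset.univ : Finset (Fin k)) = {i, j} := by
        ext q
        simp only [Finset.mem_univ, Finset.mem_insert, Finset.mem_singleton, true_iff]
        exact huniv q
      rw [hU, Finset.sum_pair hij] at hlam0 hlamc
      have hlamj : lam j = -lam i := by linarith
      rw [hlamj] at hlamc
      have : lam i • (c i - c j) = 0 := by
        linear_combination (norm := module) hlamc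
      rcases smul_eq_zero.1 this with h | h
      · exact hall i h
      · exact hij (hinj (by linear_combination (norm := module) h))

/-- the positive-side triangulation of a circuit -/
lemma build_triang (hinj : Function.Injective c)
    (hmin : ∀ s : Set (Fin k), s ≠ Set.univ → AffineIndependent ℝ (fun j : s => c j))
    (hlam0 : ∑ p, lam p = 0) (hlamc : ∑ p, lam p • c p = 0) (hall : ∀ p, lam p ≠ 0)
    (hspan : affineSpan ℝ (Set.range c) = ⊤) :
    IsTriang d (Set.range c) ((fun m => Set.range c \ {c m}) '' {m | 0 < lam m}) := by
  classical
  refine ⟨?_, ?_, ?_⟩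
  · rintro σ ⟨m, hm, rfl⟩
    dsimp only
    rw [facet_eq hinj m]
    exact ⟨(Set.image_subset_range c _), facet_indep hmin m,
      facet_span hmin hlam0 hlamc hall hspan m⟩
  · rintro σ ⟨m, hm, rfl⟩ σ' ⟨n, hn, rfl⟩
    dsimp only
    rw [facet_eq hinj m, facet_eq hinj n]
    by_cases hmn : m = n
    · subst hmn
      rw [Set.inter_self]
      exact ⟨IsExtreme.rfl, IsExtreme.rfl⟩
    · have hmU : Finset.univ.erase m ≠ Finset.univ := fun h => by
        have := Finset.notMem_erase m (Finset.univ : Finset (Fin k))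
        rw [h] at this
        exact this (Finset.mem_univ m)
      have hnU : Finset.univ.erase n ≠ Finset.univ := fun h => by
        have := Finset.notMem_erase n (Finset.univ : Finset (Fin k))
        rw [h] at this
        exact this (Finset.mem_univ n)
      have hIcap : convexHull ℝ (c '' ↑(Finset.univ.erase m)) ∩
          convexHull ℝ (c '' ↑(Finset.univ.erase n)) =
          convexHull ℝ (c '' ↑((Finset.univ.erase m).erase n)) := by
        apply Set.Subset.antisymm
        · exact inter_hull_subset hinj hmin hlam0 hlamc hall hm hn hmn
        · apply Set.subset_inter
          · exact convexHull_mono (Set.image_mono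
              (Finset.coe_subset.2 (Finset.erase_subset _ _)))
          · exact convexHull_mono (Set.image_mono
              (Finset.coe_subset.2 (Finset.erase_subset_erase _ (Finset.erase_subset _ _))))
      rw [hIcap]
      constructor
      · exact face_extreme hinj hmin (Finset.erase_subset _ _) hmU
      · exact face_extreme hinj hmin
          (Finset.erase_subset_erase _ (Finset.erase_subset _ _)) hnU
  · apply Set.Subset.antisymm
    · apply Set.iUnion₂_subset
      rintro σ ⟨m, hm, rfl⟩
      exact convexHull_mono Set.diff_subset
    · intro x hx
      obtain ⟨m, hm, hmem⟩ := hull_covering hinj hlam0 hlamc hall hx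
      refine Set.mem_biUnion ⟨m, hm, rfl⟩ ?_
      show x ∈ convexHull ℝ (Set.range c \ {c m})
      rw [facet_eq hinj m]
      exact hmem

end CircuitHelpers

/-- For a full-dimensional circuit `C` with signed partition `(C₊, C₋)`,
two simplices `C \ {c}` and `C \ {c'}` lie in a common triangulation of `C` if and
only if `c` and `c'` lie on the same side of the partition. -/
theorem circuit_simplices_compatible_iff_same_side (d k : ℕ) (c : Fin k → (Fin d → ℝ))
    (hinj : Function.Injective c)
    (hmin : ∀ s : Set (Fin k), s ≠ Set.univ → AffineIndependent ℝ (fun j : s => c j))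
    (lam : Fin k → ℝ) (hlam : lam ≠ 0) (h0 : (∑ i, lam i) = 0)
    (hc : (∑ i, lam i • c i) = 0) (hall : ∀ i, lam i ≠ 0)
    (hspan : affineSpan ℝ (Set.range c) = ⊤) (i j : Fin k) :
    (∃ T, IsTriang d (Set.range c) T ∧
        (Set.range c \ {c i}) ∈ T ∧ (Set.range c \ {c j}) ∈ T) ↔
      ((0 < lam i ∧ 0 < lam j) ∨ (lam i < 0 ∧ lam j < 0)) := by
  constructor
  · rintro ⟨T, hT, hiT, hjT⟩
    rcases lt_trichotomy (lam i) 0 with hi | hi | hi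
    · rcases lt_trichotomy (lam j) 0 with hj | hj | hj
      · exact Or.inr ⟨hi, hj⟩
      · exact absurd hj (hall j)
      · exact absurd (no_common_triang hinj hmin h0 hc hall hj hi hT hjT hiT) not_false
    · exact absurd hi (hall i)
    · rcases lt_trichotomy (lam j) 0 with hj | hj | hj
      · exact absurd (no_common_triang hinj hmin h0 hc hall hi hj hT hiT hjT) not_false
      · exact absurd hj (hall j)
      · exact Or.inl ⟨hi, hj⟩
  · rintro (⟨hi, hj⟩ | ⟨hi, hj⟩)
    · exact ⟨_, build_triang hinj hmin h0 hc hall hspan, ⟨i, hi, rfl⟩, ⟨j, hj, rfl⟩⟩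
    · refine ⟨_, build_triang (lam := fun p => -lam p) hinj hmin ?_ ?_ (fun p => ?_) hspan,
        ⟨i, ?_, rfl⟩, ⟨j, ?_, rfl⟩⟩
      · rw [Finset.sum_neg_distrib, h0, neg_zero]
      · rw [Finset.sum_congr rfl (fun p (_ : p ∈ Finset.univ) => (neg_smul (lam p) (c p))),
          Finset.sum_neg_distrib, hc, neg_zero]
      · simpa using hall p
      · simpa using hi
      · simpa using hj
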